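/- Let T be a locally finite rooted tree with root x and without leaves. Then there exists n ≥ 1 such that F^n_T(x) is infinite if and only if T has an infinite independent path. -/

import Mathlib

open SimpleGraph

/-- The `d`-ary tree: vertices are finite words over `Fin d`, the root is `[]`,
and each vertex `l` is adjacent to its `d` children `a :: l`. -/
def daryTree (d : ℕ) : SimpleGraph (List (Fin d)) where
  Adj x y := (∃ a, y = a :: x) ∨ (∃ a, x = a :: y)
  symm := by
    constructor
    intro x y h
    rcases h with ⟨a, ha⟩ | ⟨a, ha⟩
    · exact Or.inr ⟨a, ha⟩
    · exact Or.inl ⟨a, ha⟩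
  loopless := by
    constructor
    intro x h
    rcases h with ⟨a, ha⟩ | ⟨a, ha⟩ <;>
    · apply_fun List.length at ha
      simp at ha

/-- `C` is a contour of `G`: a finite set of edges whose deletion leaves exactly one
finite connected component, minimal with this property. -/
def IsContour {V : Type*} (G : SimpleGraph V) (C : Set (Sym2 V)) : Prop :=
  C.Finite ∧ C ⊆ G.edgeSet ∧
    (∃! K : (G.deleteEdges C).ConnectedComponent, K.supp.Finite) ∧
    ∀ e ∈ C, ∀ K : (G.deleteEdges (C \ {e})).ConnectedComponent, ¬ K.supp.Finite

/-- `I` is the (unique) finite connected component `I_C` of `G \ C`. -/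
def IsInterior {V : Type*} (G : SimpleGraph V) (C : Set (Sym2 V)) (I : Set V) : Prop :=
  I.Finite ∧ ∃ K : (G.deleteEdges C).ConnectedComponent, K.supp = I

/-- `F^n_G(x)`: the set of contours of `G` of size `n` whose finite component contains `x`. -/
def contours {V : Type*} (G : SimpleGraph V) (x : V) (n : ℕ) : Set (Set (Sym2 V)) :=
  {C | IsContour G C ∧ C.ncard = n ∧
    ((G.deleteEdges C).connectedComponentMk x).supp.Finite}

/-- Rooted contours: contours in `F^n_G(x)` containing an edge incident with `x`. -/
def rootedContours {V : Type*} (G : SimpleGraph V) (x : V) (n : ℕ) : Set (Set (Sym2 V)) :=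
  {C | C ∈ contours G x n ∧ ∃ e ∈ C, x ∈ e}

/-- `G` has an infinite independent path: a one-sided infinite path all of whose
vertices other than possibly the initial one have degree two in `G`. -/
def HasInfiniteIndependentPath {V : Type*} (G : SimpleGraph V) : Prop :=
  ∃ f : ℕ → V, Function.Injective f ∧ (∀ i, G.Adj (f i) (f (i + 1))) ∧
    ∀ i, 1 ≤ i → (G.neighborSet (f i)).ncard = 2


/-!
A contour `C` with `x ∈ I_C` is the edge boundary `∂S` of the finite vertex set `S = I_C`, which
contains, with each vertex, every vertex of the path from it to `x`. Conversely `∂S` is a contour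
for every such finite `S ∋ x`: since the tree has no leaves, every vertex has a child (a
neighbour farther from `x`), so every component of `T ∖ ∂S` other than `S` is infinite. Removing
from `S` a vertex `l` farthest from `x` lowers `|∂S|` by `deg l - 2`, so `S` has at most
`|∂S| - 2` vertices of degree at least three.

An infinite independent path eventually moves away from `x`; along it, the vertex sets of the
paths from `x` have boundaries of constant size, giving infinitely many contours of that size.
Conversely, if there are infinitely many contours of size `n`, the union of their interiors is
infinite, and Kőnig's lemma gives a ray from `x` each initial segment of which lies in one
interior. The ray then passes through at most `n - 2` vertices of degree at least three, and its
tail beyond them is an infinite independent path.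
-/

theorem exists_seq_of_forall_exists {α : Type*} {P : α → Prop} {r : α → α → Prop}
    (h : ∀ a, P a → ∃ b, r a b ∧ P b) {a : α} (ha : P a) :
    ∃ f : ℕ → α, f 0 = a ∧ ∀ n, r (f n) (f (n + 1)) ∧ P (f n) := by
  choose! g hg using h
  have hP : ∀ n, P (g^[n] a) := by
    intro n
    induction n with
    | zero => exact ha
    | succ n ih =>
      rw [Function.iterate_succ_apply']
      exact (hg _ ih).2
  refine ⟨fun n => g^[n] a, rfl, fun n => ⟨?_, hP n⟩⟩
  show r (g^[n] a) (g^[n + 1] a)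
  rw [Function.iterate_succ_apply']
  exact (hg _ (hP n)).1

theorem Nat.finite_of_forall_ncard_inter_Iic_le {s : Set ℕ} {k : ℕ}
    (h : ∀ i, (s ∩ Set.Iic i).ncard ≤ k) : s.Finite := by
  by_contra hs
  obtain ⟨t, hts, htfin, htk⟩ := Set.Infinite.exists_subset_ncard_eq hs (k + 1)
  obtain ⟨i, hi⟩ := htfin.bddAbove
  have := Set.ncard_le_ncard (s := t) (t := s ∩ Set.Iic i) (fun j hj => ⟨hts hj, hi hj⟩)
    ((Set.finite_Iic i).inter_of_right s)
  have := h i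
  omega

namespace SimpleGraph

variable {V : Type*} {G : SimpleGraph V} {x u v w : V}

/-! ### Geodesic intervals -/

def geodesicInterval (G : SimpleGraph V) (x v : V) : Set V :=
  {u | G.dist x u + G.dist u v = G.dist x v}

@[simp]
lemma mem_geodesicInterval :
    u ∈ G.geodesicInterval x v ↔ G.dist x u + G.dist u v = G.dist x v :=
  Iff.rfl

lemma left_mem_geodesicInterval : x ∈ G.geodesicInterval x v := by simp

lemma right_mem_geodesicInterval : v ∈ G.geodesicInterval x v := by simp

lemma dist_le_of_mem_geodesicInterval (hu : u ∈ G.geodesicInterval x v) :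
    G.dist x u ≤ G.dist x v := by
  rw [mem_geodesicInterval] at hu
  omega

lemma adj_mem_geodesicInterval (hadj : G.Adj w v) (hd : G.dist x v = G.dist x w + 1) :
    w ∈ G.geodesicInterval x v := by
  simp [dist_eq_one_iff_adj.2 hadj, hd]

lemma Connected.geodesicInterval_subset (hG : G.Connected) (hu : u ∈ G.geodesicInterval x v) :
    G.geodesicInterval x u ⊆ G.geodesicInterval x v := by
  intro w hw
  rw [mem_geodesicInterval] at *
  have : G.dist w v ≤ G.dist w u + G.dist u v := hG.dist_triangle
  have : G.dist x v ≤ G.dist x w + G.dist w v := hG.dist_triangle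
  omega

lemma Walk.mem_geodesicInterval_of_mem_support (p : G.Walk x v) (hp : p.length = G.dist x v)
    (hu : u ∈ p.support) : u ∈ G.geodesicInterval x v := by
  obtain ⟨q, r, rfl⟩ := p.mem_support_iff_exists_append.mp hu
  have : G.dist x v ≤ G.dist x u + G.dist u v := q.reachable.dist_triangle_left v
  have : G.dist x u ≤ q.length := dist_le q
  have : G.dist u v ≤ r.length := dist_le r
  rw [Walk.length_append] at hp
  rw [mem_geodesicInterval]
  omega

lemma Connected.exists_adj_dist_add_one_eq (hG : G.Connected) (h : u ≠ v) :
    ∃ c, G.Adj u c ∧ G.dist c v + 1 = G.dist u v := by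
  obtain ⟨p, hp⟩ := hG.exists_walk_length_eq_dist u v
  have hnil : ¬ p.Nil := fun hn => h hn.eq
  refine ⟨p.snd, p.adj_snd hnil, ?_⟩
  have : G.dist p.snd v ≤ p.tail.length := dist_le p.tail
  have : G.dist u v ≤ G.dist u p.snd + G.dist p.snd v := hG.dist_triangle
  have : G.dist u p.snd = 1 := dist_eq_one_iff_adj.2 (p.adj_snd hnil)
  have := p.length_tail_add_one hnil
  omega

lemma Connected.exists_adj_mem_geodesicInterval (hG : G.Connected)
    (hv : v ∈ G.geodesicInterval x w) (hvw : v ≠ w) :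
    ∃ c, G.Adj v c ∧ G.dist x c = G.dist x v + 1 ∧ c ∈ G.geodesicInterval x w := by
  obtain ⟨c, hadj, hc⟩ := hG.exists_adj_dist_add_one_eq hvw
  have : G.dist x c ≤ G.dist x v + G.dist v c := hG.dist_triangle
  have : G.dist x w ≤ G.dist x c + G.dist c w := hG.dist_triangle
  have : G.dist v c = 1 := dist_eq_one_iff_adj.2 hadj
  rw [mem_geodesicInterval] at hv
  exact ⟨c, hadj, by omega, by rw [mem_geodesicInterval]; omega⟩

lemma Connected.mem_geodesicInterval_of_le (hG : G.Connected) {r : ℕ → V}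
    (hadj : ∀ i, G.Adj (r i) (r (i + 1))) (hdist : ∀ i, G.dist x (r (i + 1)) = G.dist x (r i) + 1)
    {i j : ℕ} (hji : j ≤ i) : r j ∈ G.geodesicInterval x (r i) := by
  induction i, hji using Nat.le_induction with
  | base => exact right_mem_geodesicInterval
  | succ i _ ih =>
    exact hG.geodesicInterval_subset (adj_mem_geodesicInterval (hadj i) (hdist i)) ih

/-! ### Trees -/

lemma IsTree.geodesicInterval_subset_support (hG : G.IsTree) {p : G.Walk x v} (hp : p.IsPath) :
    G.geodesicInterval x v ⊆ {u | u ∈ p.support} := by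
  intro u hu
  obtain ⟨q, hq⟩ := hG.connected.exists_walk_length_eq_dist x u
  obtain ⟨r, hr⟩ := hG.connected.exists_walk_length_eq_dist u v
  have hqr : (q.append r).IsPath := (q.append r).isPath_of_length_eq_dist (by
    rw [Walk.length_append, hq, hr]
    exact hu)
  obtain rfl : p = q.append r :=
    congrArg Subtype.val ((hG.isAcyclic.subsingleton_path x v).elim ⟨p, hp⟩ ⟨_, hqr⟩)
  simp

lemma IsTree.finite_geodesicInterval (hG : G.IsTree) (x v : V) :
    (G.geodesicInterval x v).Finite := by
  obtain ⟨p, hp, -⟩ := hG.connected.exists_path_of_dist x v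
  exact p.support.finite_toSet.subset (hG.geodesicInterval_subset_support hp)

lemma IsTree.geodesicInterval_eq_insert (hG : G.IsTree) (hadj : G.Adj w v)
    (hd : G.dist x v = G.dist x w + 1) :
    G.geodesicInterval x v = insert v (G.geodesicInterval x w) := by
  refine subset_antisymm (fun u hu => ?_) (Set.insert_subset right_mem_geodesicInterval
    (hG.connected.geodesicInterval_subset (adj_mem_geodesicInterval hadj hd)))
  obtain ⟨q, hq⟩ := hG.connected.exists_walk_length_eq_dist x w
  have hqv : (q.concat hadj).length = G.dist x v := by rw [Walk.length_concat, hq, hd]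
  have hu' := hG.geodesicInterval_subset_support ((q.concat hadj).isPath_of_length_eq_dist hqv) hu
  simp only [Set.mem_ofPred_eq, Walk.support_concat, List.mem_append, List.mem_singleton] at hu'
  rcases hu' with hu' | rfl
  · exact Or.inr (q.mem_geodesicInterval_of_mem_support hq hu')
  · exact Or.inl rfl

lemma IsTree.eq_of_adj_of_dist_eq_add_one (hG : G.IsTree) (hw : G.Adj w v) (hu : G.Adj u v)
    (hwd : G.dist x v = G.dist x w + 1) (hud : G.dist x v = G.dist x u + 1) : w = u := by
  have hwI := adj_mem_geodesicInterval hw hwd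
  rw [hG.geodesicInterval_eq_insert hu hud] at hwI
  rcases hwI with rfl | hwI
  · omega
  · rw [mem_geodesicInterval] at hwI
    exact hG.connected.dist_eq_zero_iff.1 (by omega)

lemma IsTree.dist_eq_add_one_of_adj_of_ne (hG : G.IsTree) (hwv : G.Adj w v) (hvu : G.Adj v u)
    (huw : u ≠ w) (hd : G.dist x v = G.dist x w + 1) : G.dist x u = G.dist x v + 1 :=
  (hG.dist_eq_dist_add_one_of_adj x hvu).resolve_left fun h =>
    huw (hG.eq_of_adj_of_dist_eq_add_one hvu.symm hwv h hd)

lemma IsTree.exists_adj_dist_eq_add_one (hG : G.IsTree) (hfin : (G.neighborSet v).Finite)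
    (hdeg : 2 ≤ (G.neighborSet v).ncard) (x : V) :
    ∃ c, G.Adj v c ∧ G.dist x c = G.dist x v + 1 := by
  obtain ⟨a, b, ha, hb, hab⟩ := (Set.one_lt_ncard_iff hfin).1 hdeg
  by_contra! h
  exact hab (hG.eq_of_adj_of_dist_eq_add_one ha.symm hb.symm
    ((hG.dist_eq_dist_add_one_of_adj x ha).resolve_right (h a ha))
    ((hG.dist_eq_dist_add_one_of_adj x hb).resolve_right (h b hb)))

/-! ### Edge boundaries -/

def edgeBoundary (G : SimpleGraph V) (S : Set V) : Set (Sym2 V) :=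
  {e | e ∈ G.edgeSet ∧ (∃ a ∈ e, a ∈ S) ∧ ∃ b ∈ e, b ∉ S}

variable {S : Set V}

@[simp]
lemma mk_mem_edgeBoundary :
    s(u, v) ∈ G.edgeBoundary S ↔ G.Adj u v ∧ (u ∈ S ∨ v ∈ S) ∧ (u ∉ S ∨ v ∉ S) := by
  simp only [edgeBoundary, Set.mem_ofPred_eq, mem_edgeSet, Sym2.mem_iff, exists_eq_or_imp,
    exists_eq_left]

lemma edgeBoundary_subset_edgeSet (S : Set V) : G.edgeBoundary S ⊆ G.edgeSet :=
  fun _ he => he.1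

lemma edgeBoundary_finite (hlf : ∀ v, (G.neighborSet v).Finite) (hS : S.Finite) :
    (G.edgeBoundary S).Finite := by
  refine (hS.biUnion fun a _ => (hlf a).image fun b => s(a, b)).subset ?_
  rintro e ⟨he, ⟨a, hae, haS⟩, -⟩
  obtain ⟨b, rfl⟩ := Sym2.mem_iff_exists.mp hae
  exact Set.mem_biUnion haS ⟨b, he, rfl⟩

lemma edgeBoundary_empty : G.edgeBoundary ∅ = ∅ := by
  ext e
  simp [edgeBoundary]

lemma mem_of_adj_deleteEdges_edgeBoundary (hu : u ∈ S)
    (hadj : (G.deleteEdges (G.edgeBoundary S)).Adj u v) : v ∈ S := by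
  rw [deleteEdges_adj, mk_mem_edgeBoundary] at hadj
  tauto

lemma edgeBoundary_insert (hv : v ∉ S) :
    G.edgeBoundary (insert v S) =
      (G.edgeBoundary S ∪ G.incidenceSet v) \ (G.edgeBoundary S ∩ G.incidenceSet v) := by
  ext e
  induction e using Sym2.ind with
  | _ a b =>
  simp only [mk_mem_edgeBoundary, incidenceSet, Set.mem_insert_iff, Set.mem_sdiff, Set.mem_union,
    Set.mem_inter_iff, Set.mem_ofPred_eq, mem_edgeSet, Sym2.mem_iff]
  have := G.ne_of_adj (a := a) (b := b)
  by_cases ha : a = v <;> by_cases hb : b = v <;> subst_vars <;> tauto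

lemma edgeBoundary_inter_incidenceSet (hv : v ∉ S) :
    G.edgeBoundary S ∩ G.incidenceSet v = (fun b => s(v, b)) '' (G.neighborSet v ∩ S) := by
  ext e
  constructor
  · rintro ⟨⟨he, ⟨a, ha, haS⟩, -⟩, -, hve⟩
    obtain ⟨c, rfl⟩ := Sym2.mem_iff_exists.mp hve
    rcases Sym2.mem_iff.mp ha with rfl | rfl
    · exact absurd haS hv
    · exact ⟨a, ⟨he, haS⟩, rfl⟩
  · rintro ⟨c, ⟨hadj, hc⟩, rfl⟩
    exact ⟨mk_mem_edgeBoundary.2 ⟨hadj, Or.inr hc, Or.inl hv⟩, hadj, Sym2.mem_mk_left v c⟩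

lemma incidenceSet_eq_image (v : V) :
    G.incidenceSet v = (fun b => s(v, b)) '' G.neighborSet v := by
  ext e
  constructor
  · rintro ⟨he, hve⟩
    obtain ⟨c, rfl⟩ := Sym2.mem_iff_exists.mp hve
    exact ⟨c, he, rfl⟩
  · rintro ⟨c, hc, rfl⟩
    exact (G.mem_incidenceSet v c).2 hc

lemma ncard_edgeBoundary_insert (hlf : ∀ v, (G.neighborSet v).Finite) (hS : S.Finite)
    (hv : v ∉ S) :
    (G.edgeBoundary (insert v S)).ncard + 2 * (G.neighborSet v ∩ S).ncard =
      (G.edgeBoundary S).ncard + (G.neighborSet v).ncard := by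
  have hinj : Function.Injective fun b => s(v, b) := fun _ _ h => Sym2.congr_right.1 h
  have hA := edgeBoundary_finite hlf hS
  have hB : (G.incidenceSet v).Finite := by
    rw [incidenceSet_eq_image]
    exact (hlf v).image _
  have hBcard : (G.incidenceSet v).ncard = (G.neighborSet v).ncard := by
    rw [incidenceSet_eq_image, Set.ncard_image_of_injective _ hinj]
  have hABcard : (G.edgeBoundary S ∩ G.incidenceSet v).ncard = (G.neighborSet v ∩ S).ncard := by
    rw [edgeBoundary_inter_incidenceSet hv, Set.ncard_image_of_injective _ hinj]
  have hsub : G.edgeBoundary S ∩ G.incidenceSet v ⊆ G.edgeBoundary S ∪ G.incidenceSet v :=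
    Set.inter_subset_left.trans Set.subset_union_left
  have := Set.ncard_union_add_ncard_inter _ _ hA hB
  have := Set.ncard_le_ncard hsub (hA.union hB)
  rw [edgeBoundary_insert hv, Set.ncard_sdiff' hsub (hA.union hB)]
  omega

lemma Reachable.mem_of_forall_adj_mem {H : SimpleGraph V}
    (hS : ∀ u v, u ∈ S → H.Adj u v → v ∈ S) (h : H.Reachable u v) (hu : u ∈ S) : v ∈ S := by
  obtain ⟨p⟩ := h
  induction p with
  | nil => exact hu
  | cons hadj _ ih => exact ih (hS _ _ hu hadj)

/-! ### Star-shaped sets and contours -/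

-- In a tree, the star-shaped sets containing `x` are the vertex sets of the subtrees through `x`.
def IsStarShaped (G : SimpleGraph V) (x : V) (S : Set V) : Prop :=
  ∀ v ∈ S, G.geodesicInterval x v ⊆ S

lemma Connected.isStarShaped_geodesicInterval (hG : G.Connected) (x v : V) :
    G.IsStarShaped x (G.geodesicInterval x v) :=
  fun _ hu => hG.geodesicInterval_subset hu

lemma IsTree.isStarShaped_supp (hG : G.IsTree) (D : Set (Sym2 V)) (x : V) :
    G.IsStarShaped x ((G.deleteEdges D).connectedComponentMk x).supp := by
  intro v hv u hu
  rw [ConnectedComponent.mem_supp_iff, ConnectedComponent.eq] at hv ⊢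
  obtain ⟨p, hp⟩ := hv.symm.exists_isPath
  have hu' := hG.geodesicInterval_subset_support (hp.mapLe (G.deleteEdges_le D)) hu
  rw [Set.mem_ofPred_eq, Walk.support_mapLe_eq_support] at hu'
  obtain ⟨q, -, -⟩ := p.mem_support_iff_exists_append.mp hu'
  exact q.reachable.symm

lemma IsStarShaped.supp_connectedComponentMk_eq (hG : G.Connected) (hS : G.IsStarShaped x S)
    (hx : x ∈ S) : ((G.deleteEdges (G.edgeBoundary S)).connectedComponentMk x).supp = S := by
  ext v
  rw [ConnectedComponent.mem_supp_iff, ConnectedComponent.eq]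
  refine ⟨fun h => h.symm.mem_of_forall_adj_mem
    (fun _ _ => mem_of_adj_deleteEdges_edgeBoundary) hx, fun hv => ?_⟩
  obtain ⟨p, hp⟩ := hG.exists_walk_length_eq_dist x v
  have hpS : ∀ u ∈ p.support, u ∈ S :=
    fun u hu => hS v hv (p.mem_geodesicInterval_of_mem_support hp hu)
  refine (p.toDeleteEdges _ fun e he hbd => ?_).reachable.symm
  obtain ⟨-, -, b, hb, hbS⟩ := hbd
  obtain ⟨c, rfl⟩ := Sym2.mem_iff_exists.mp hb
  exact hbS (hpS b (p.fst_mem_support_of_mem_edges he))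

-- Children of vertices outside `S` lie outside `S`, so `K.supp \ S` has no vertex farthest
-- from `x`.
lemma IsStarShaped.infinite_supp (hG : G.IsTree) (hlf : ∀ v, (G.neighborSet v).Finite)
    (hdeg : ∀ v, 2 ≤ (G.neighborSet v).ncard) (hS : G.IsStarShaped x S)
    {D : Set (Sym2 V)} (hD : D ⊆ G.edgeBoundary S) (K : (G.deleteEdges D).ConnectedComponent)
    (hK : ¬ K.supp ⊆ S) : K.supp.Infinite := by
  intro hfin
  obtain ⟨w, ⟨hwK, hwS⟩, hmax⟩ :=
    Set.exists_max_image (K.supp \ S) (G.dist x) hfin.sdiff (Set.not_subset.1 hK)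
  obtain ⟨c, hadj, hc⟩ := hG.exists_adj_dist_eq_add_one (hlf w) (hdeg w) x
  have hcS : c ∉ S := fun hcS => hwS (hS c hcS (adj_mem_geodesicInterval hadj hc))
  have hcD : s(w, c) ∉ D := fun hwc => by
    have := hD hwc
    rw [mk_mem_edgeBoundary] at this
    tauto
  have hcK : c ∈ K.supp := K.mem_supp_of_adj_mem_supp hwK (deleteEdges_adj.2 ⟨hadj, hcD⟩)
  have := hmax c ⟨hcK, hcS⟩
  omega

lemma IsStarShaped.isContour_edgeBoundary (hG : G.IsTree) (hlf : ∀ v, (G.neighborSet v).Finite)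
    (hdeg : ∀ v, 2 ≤ (G.neighborSet v).ncard) (hS : G.IsStarShaped x S) (hx : x ∈ S)
    (hfin : S.Finite) : IsContour G (G.edgeBoundary S) := by
  have hsupp := hS.supp_connectedComponentMk_eq hG.connected hx
  refine ⟨edgeBoundary_finite hlf hfin, edgeBoundary_subset_edgeSet S,
    ⟨_, hsupp ▸ hfin, fun K hK => ?_⟩, fun e he K hK => ?_⟩
  · by_contra hne
    obtain ⟨v, hv⟩ := K.nonempty_supp
    refine hS.infinite_supp hG hlf hdeg subset_rfl K (fun hKS => hne ?_) hK
    exact ConnectedComponent.eq_of_common_vertex hv (by rw [hsupp]; exact hKS hv)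
  · refine hS.infinite_supp hG hlf hdeg Set.sdiff_subset K (fun hKS => ?_) hK
    obtain ⟨hab, ⟨a, ha, haS⟩, b, hb, hbS⟩ := he
    obtain rfl := (Sym2.mem_and_mem_iff (x := a) (y := b) fun h => hbS (h ▸ haS)).1 ⟨ha, hb⟩
    obtain ⟨v, hv⟩ := K.nonempty_supp
    have hvx : v ∈ ((G.deleteEdges (G.edgeBoundary S)).connectedComponentMk x).supp := by
      rw [hsupp]
      exact hKS hv
    have hxK : ((G.deleteEdges (G.edgeBoundary S)).connectedComponentMk x).supp ⊆ K.supp := by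
      rw [← (ConnectedComponent.mem_supp_iff _ _).1 hvx]
      exact ConnectedComponent.connectedComponentMk_supp_subset_supp
        (deleteEdges_anti Set.sdiff_subset) K hv
    have haK : a ∈ K.supp := hxK (by rw [hsupp]; exact haS)
    exact hbS (hKS (K.mem_supp_of_adj_mem_supp haK (deleteEdges_adj.2 ⟨hab, fun h => h.2 rfl⟩)))

lemma IsContour.eq_edgeBoundary {C : Set (Sym2 V)} (hC : IsContour G C)
    (hfin : ((G.deleteEdges C).connectedComponentMk x).supp.Finite) :
    C = G.edgeBoundary ((G.deleteEdges C).connectedComponentMk x).supp := by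
  obtain ⟨-, -, -, hmin⟩ := hC
  set K := (G.deleteEdges C).connectedComponentMk x
  refine subset_antisymm (fun e heC => by_contra fun hebd => ?_) ?_
  · refine hmin e heC ((G.deleteEdges (C \ {e})).connectedComponentMk x)
      (hfin.subset fun v hv => ?_)
    rw [ConnectedComponent.mem_supp_iff, ConnectedComponent.eq] at hv
    refine hv.symm.mem_of_forall_adj_mem (fun u w hu hadj => ?_)
      ((ConnectedComponent.mem_supp_iff _ _).2 rfl)
    rw [deleteEdges_adj] at hadj
    by_cases huw : s(u, w) ∈ C
    · obtain rfl : s(u, w) = e := by_contra fun h => hadj.2 ⟨huw, h⟩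
      by_contra hw
      exact hebd (mk_mem_edgeBoundary.2 ⟨hadj.1, Or.inl hu, Or.inr hw⟩)
    · exact K.mem_supp_of_adj_mem_supp hu (deleteEdges_adj.2 ⟨hadj.1, huw⟩)
  · rintro e ⟨hab, ⟨a, ha, haK⟩, b, hb, hbK⟩
    obtain rfl := (Sym2.mem_and_mem_iff (x := a) (y := b) fun h => hbK (h ▸ haK)).1 ⟨ha, hb⟩
    by_contra heC
    exact hbK (K.mem_supp_of_adj_mem_supp haK (deleteEdges_adj.2 ⟨hab, heC⟩))

lemma IsStarShaped.edgeBoundary_mem_contours (hG : G.IsTree)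
    (hlf : ∀ v, (G.neighborSet v).Finite) (hdeg : ∀ v, 2 ≤ (G.neighborSet v).ncard)
    (hS : G.IsStarShaped x S) (hx : x ∈ S) (hfin : S.Finite) :
    G.edgeBoundary S ∈ contours G x (G.edgeBoundary S).ncard :=
  ⟨hS.isContour_edgeBoundary hG hlf hdeg hx hfin, rfl, by
    rw [hS.supp_connectedComponentMk_eq hG.connected hx]
    exact hfin⟩

lemma IsStarShaped.eq_of_edgeBoundary_eq (hG : G.Connected) {T : Set V}
    (hS : G.IsStarShaped x S) (hT : G.IsStarShaped x T) (hxS : x ∈ S) (hxT : x ∈ T)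
    (h : G.edgeBoundary S = G.edgeBoundary T) : S = T := by
  rw [← hS.supp_connectedComponentMk_eq hG hxS, ← hT.supp_connectedComponentMk_eq hG hxT, h]

lemma IsTree.exists_isStarShaped_of_mem_contours (hG : G.IsTree) {C : Set (Sym2 V)} {n : ℕ}
    (hC : C ∈ contours G x n) :
    ∃ S, S.Finite ∧ G.IsStarShaped x S ∧ x ∈ S ∧ (G.edgeBoundary S).ncard = n ∧
      G.edgeBoundary S = C := by
  obtain ⟨hC, rfl, hfin⟩ := hC
  rw [hC.eq_edgeBoundary hfin]
  exact ⟨_, hfin, hG.isStarShaped_supp C x, (ConnectedComponent.mem_supp_iff _ _).2 rfl, rfl, rfl⟩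

lemma IsStarShaped.exists_leaf (hG : G.IsTree)
    (hS : G.IsStarShaped x S) (hfin : S.Finite) (hS2 : 1 < S.ncard) :
    ∃ l ∈ S, G.IsStarShaped x (S \ {l}) ∧ (G.neighborSet l ∩ (S \ {l})).ncard = 1 := by
  obtain ⟨a, b, ha, hb, hab⟩ := (Set.one_lt_ncard_iff hfin).1 hS2
  obtain ⟨l, hlS, hmax⟩ := Set.exists_max_image S (G.dist x) hfin ⟨a, ha⟩
  have hlx : l ≠ x := by
    rintro rfl
    have ha' := hmax a ha
    have hb' := hmax b hb
    rw [dist_self, Nat.le_zero, hG.connected.dist_eq_zero_iff] at ha' hb'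
    exact hab (ha'.symm.trans hb')
  obtain ⟨p, hlp, hp⟩ := hG.connected.exists_adj_dist_add_one_eq hlx
  rw [dist_comm, dist_comm (u := l)] at hp
  have hpS : p ∈ S := hS l hlS (adj_mem_geodesicInterval hlp.symm hp.symm)
  refine ⟨l, hlS, fun v hv u hu => ⟨hS v hv.1 hu, fun hul => hv.2 ?_⟩, ?_⟩
  · have := hmax v hv.1
    rw [Set.mem_singleton_iff.1 hul, mem_geodesicInterval] at hu
    exact (hG.connected.dist_eq_zero_iff.1 (by omega)).symm
  · suffices G.neighborSet l ∩ (S \ {l}) = {p} by rw [this, Set.ncard_singleton]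
    refine Set.eq_singleton_iff_unique_mem.2 ⟨⟨hlp, hpS, hlp.ne'⟩, ?_⟩
    rintro w ⟨hlw, hwS, -⟩
    have hw : G.dist x l = G.dist x w + 1 :=
      (hG.dist_eq_dist_add_one_of_adj x hlw).resolve_right fun h => by
        have := hmax w hwS
        omega
    exact hG.eq_of_adj_of_dist_eq_add_one hlw.symm hlp.symm hw hp.symm

lemma ncard_sep_insert_le {T : Set V} (hT : T.Finite) (hdeg : 2 ≤ (G.neighborSet v).ncard) :
    {u ∈ insert v T | 3 ≤ (G.neighborSet u).ncard}.ncard ≤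
      {u ∈ T | 3 ≤ (G.neighborSet u).ncard}.ncard + ((G.neighborSet v).ncard - 2) := by
  have hTfin : {u ∈ T | 3 ≤ (G.neighborSet u).ncard}.Finite := hT.subset fun _ hu => hu.1
  by_cases hv3 : 3 ≤ (G.neighborSet v).ncard
  · have hsub : {u ∈ insert v T | 3 ≤ (G.neighborSet u).ncard} ⊆
        insert v {u ∈ T | 3 ≤ (G.neighborSet u).ncard} := by
      rintro u ⟨rfl | hu, h3⟩
      exacts [Set.mem_insert _ _, Set.mem_insert_of_mem _ ⟨hu, h3⟩]
    have := (Set.ncard_le_ncard hsub (hTfin.insert v)).trans (Set.ncard_insert_le _ _)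
    omega
  · have hsub : {u ∈ insert v T | 3 ≤ (G.neighborSet u).ncard} ⊆
        {u ∈ T | 3 ≤ (G.neighborSet u).ncard} := by
      rintro u ⟨rfl | hu, h3⟩
      exacts [absurd h3 hv3, ⟨hu, h3⟩]
    have := Set.ncard_le_ncard hsub hTfin
    omega

lemma IsStarShaped.ncard_branch_add_two_le (hG : G.IsTree) (hlf : ∀ v, (G.neighborSet v).Finite)
    (hdeg : ∀ v, 2 ≤ (G.neighborSet v).ncard) (hS : G.IsStarShaped x S) (hfin : S.Finite)
    (hne : S.Nonempty) :
    {v ∈ S | 3 ≤ (G.neighborSet v).ncard}.ncard + 2 ≤ (G.edgeBoundary S).ncard := by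
  obtain ⟨m, hm⟩ : ∃ m, S.ncard = m := ⟨_, rfl⟩
  induction m generalizing S with
  | zero => exact absurd hm ((Set.ncard_pos hfin).2 hne).ne'
  | succ m ih =>
    rcases Nat.eq_zero_or_pos m with rfl | hm0
    · obtain ⟨v, rfl⟩ := Set.ncard_eq_one.1 hm
      have hbd := ncard_edgeBoundary_insert hlf Set.finite_empty (Set.notMem_empty v)
      have hbr := ncard_sep_insert_le (v := v) Set.finite_empty (hdeg v)
      have := hdeg v
      simp only [insert_empty_eq, Set.inter_empty, Set.ncard_empty, edgeBoundary_empty,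
        Set.sep_empty] at hbd hbr
      omega
    · obtain ⟨l, hlS, hS', hN⟩ := hS.exists_leaf hG hfin (by omega)
      have hl : l ∉ S \ {l} := fun h => h.2 rfl
      have hbd := ncard_edgeBoundary_insert hlf hfin.sdiff hl
      have hbr := ncard_sep_insert_le (v := l) (hfin.sdiff (t := {l})) (hdeg l)
      rw [Set.insert_sdiff_singleton, Set.insert_eq_of_mem hlS] at hbd hbr
      have hcard : (S \ {l}).ncard = m := by rw [Set.ncard_sdiff_singleton_of_mem hlS, hm]; rfl
      have ih' := ih hS' hfin.sdiff (Set.nonempty_of_ncard_ne_zero (by omega)) hcard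
      have := hdeg l
      omega

lemma IsTree.ncard_edgeBoundary_geodesicInterval_eq (hG : G.IsTree)
    (hlf : ∀ v, (G.neighborSet v).Finite) (hwv : G.Adj w v) (hvu : G.Adj v u)
    (hwd : G.dist x v = G.dist x w + 1) (hud : G.dist x u = G.dist x v + 1)
    (hdeg : (G.neighborSet v).ncard = 2) :
    (G.edgeBoundary (G.geodesicInterval x v)).ncard =
      (G.edgeBoundary (G.geodesicInterval x w)).ncard := by
  have hnotmem : ∀ {y}, G.dist x w < G.dist x y → y ∉ G.geodesicInterval x w :=
    fun hy hyI => (dist_le_of_mem_geodesicInterval hyI).not_gt hy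
  have hN : G.neighborSet v = {w, u} := by
    refine (Set.eq_of_subset_of_ncard_le
      (show {w, u} ⊆ G.neighborSet v from Set.pair_subset hwv.symm hvu) ?_ (hlf v)).symm
    rw [hdeg, Set.ncard_pair (by rintro rfl; omega)]
  have hNS : G.neighborSet v ∩ G.geodesicInterval x w = {w} := by
    rw [hN, Set.insert_inter_of_mem right_mem_geodesicInterval,
      Set.singleton_inter_eq_empty.2 (hnotmem (y := u) (by omega)), insert_empty_eq]
  have := ncard_edgeBoundary_insert hlf (hG.finite_geodesicInterval x w)
    (hnotmem (y := v) (by omega))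
  rw [← hG.geodesicInterval_eq_insert hwv hwd, hNS, Set.ncard_singleton, hdeg] at this
  omega

/-! ### Independent paths -/

lemma IsTree.exists_forall_dist_add_one (hG : G.IsTree) (x : V) {f : ℕ → V}
    (hadj : ∀ i, G.Adj (f i) (f (i + 1))) (hf : ∀ i, f (i + 2) ≠ f i) :
    ∃ N, ∀ i, N ≤ i → G.dist x (f (i + 1)) = G.dist x (f i) + 1 := by
  obtain ⟨N, hN⟩ : ∃ N, G.dist x (f (N + 1)) = G.dist x (f N) + 1 := by
    by_contra! h
    have hdec : ∀ i, G.dist x (f i) + i ≤ G.dist x (f 0) := by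
      intro i
      induction i with
      | zero => simp
      | succ i ih =>
        have := (hG.dist_eq_dist_add_one_of_adj x (hadj i)).resolve_right (h i)
        omega
    have := hdec (G.dist x (f 0) + 1)
    omega
  refine ⟨N, fun i hi => ?_⟩
  induction i, hi using Nat.le_induction with
  | base => exact hN
  | succ i _ ih => exact hG.dist_eq_add_one_of_adj_of_ne (hadj i) (hadj (i + 1)) (hf i) ih

lemma IsTree.exists_outward_of_hasInfiniteIndependentPath (hG : G.IsTree)
    (h : HasInfiniteIndependentPath G) (x : V) :
    ∃ g : ℕ → V, (∀ i, G.Adj (g i) (g (i + 1))) ∧ (∀ i, (G.neighborSet (g (i + 1))).ncard = 2) ∧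
      ∀ i, G.dist x (g (i + 1)) = G.dist x (g i) + 1 := by
  obtain ⟨f, hinj, hadj, hdeg⟩ := h
  obtain ⟨N, hN⟩ := hG.exists_forall_dist_add_one x hadj fun i h => by
    have := hinj h
    omega
  refine ⟨fun i => f (i + N), fun i => ?_, fun i => hdeg _ (by omega), fun i => ?_⟩
  · simpa only [Nat.add_right_comm] using hadj (i + N)
  · simpa only [Nat.add_right_comm] using hN (i + N) (by omega)

lemma IsTree.contours_infinite_of_hasInfiniteIndependentPath (hG : G.IsTree)
    (hlf : ∀ v, (G.neighborSet v).Finite) (hdeg : ∀ v, 2 ≤ (G.neighborSet v).ncard) (x : V)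
    (h : HasInfiniteIndependentPath G) : ∃ n, 1 ≤ n ∧ (contours G x n).Infinite := by
  obtain ⟨g, hadj, hdeg2, hdist⟩ := hG.exists_outward_of_hasInfiniteIndependentPath h x
  have hdist' : ∀ m, G.dist x (g m) = G.dist x (g 0) + m := by
    intro m
    induction m with
    | zero => rfl
    | succ m ih => rw [hdist, ih, Nat.add_assoc]
  have hstar : ∀ m, G.IsStarShaped x (G.geodesicInterval x (g m)) :=
    fun m => hG.connected.isStarShaped_geodesicInterval x (g m)
  have hconst : ∀ m, (G.edgeBoundary (G.geodesicInterval x (g m))).ncard =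
      (G.edgeBoundary (G.geodesicInterval x (g 0))).ncard := by
    intro m
    induction m with
    | zero => rfl
    | succ m ih => rw [hG.ncard_edgeBoundary_geodesicInterval_eq hlf (hadj m) (hadj (m + 1))
        (hdist m) (hdist (m + 1)) (hdeg2 m), ih]
  have hmem : ∀ m, G.edgeBoundary (G.geodesicInterval x (g m)) ∈
      contours G x (G.edgeBoundary (G.geodesicInterval x (g 0))).ncard := fun m =>
    hconst m ▸ (hstar m).edgeBoundary_mem_contours hG hlf hdeg left_mem_geodesicInterval
      (hG.finite_geodesicInterval x (g m))
  have hg1 : g 1 ∉ G.geodesicInterval x (g 0) := fun h1 => by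
    have := dist_le_of_mem_geodesicInterval h1
    rw [hdist 0] at this
    omega
  refine ⟨_, (Set.ncard_pos (edgeBoundary_finite hlf (hG.finite_geodesicInterval x (g 0)))).2
    ⟨_, mk_mem_edgeBoundary.2 ⟨hadj 0, Or.inl right_mem_geodesicInterval, Or.inr hg1⟩⟩,
    Set.infinite_of_injective_forall_mem (fun m k hmk => ?_) hmem⟩
  have hS := (hstar m).eq_of_edgeBoundary_eq hG.connected (hstar k) left_mem_geodesicInterval
    left_mem_geodesicInterval hmk
  have h1 := dist_le_of_mem_geodesicInterval (hS ▸ right_mem_geodesicInterval)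
  have h2 := dist_le_of_mem_geodesicInterval (hS.symm ▸ right_mem_geodesicInterval)
  rw [hdist' m, hdist' k] at h1 h2
  omega

-- Kőnig's lemma.
lemma Connected.exists_ray_of_infinite (hG : G.Connected) (hlf : ∀ v, (G.neighborSet v).Finite)
    (x : V) {R : Set V} (hR : R.Infinite) :
    ∃ r : ℕ → V, r 0 = x ∧ ∀ i, G.Adj (r i) (r (i + 1)) ∧
      G.dist x (r (i + 1)) = G.dist x (r i) + 1 ∧
      {w ∈ R | r i ∈ G.geodesicInterval x w}.Infinite := by
  have hstep : ∀ v, {w ∈ R | v ∈ G.geodesicInterval x w}.Infinite → ∃ c,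
      (G.Adj v c ∧ G.dist x c = G.dist x v + 1) ∧
        {w ∈ R | c ∈ G.geodesicInterval x w}.Infinite := by
    intro v hv
    by_contra! h
    have hchildren : {c | G.Adj v c ∧ G.dist x c = G.dist x v + 1}.Finite :=
      (hlf v).subset fun _ hc => hc.1
    refine hv (((hchildren.biUnion fun c hc => h c hc).insert v).subset ?_)
    rintro w ⟨hwR, hvw⟩
    by_cases hw : v = w
    · exact Or.inl hw.symm
    obtain ⟨c, hadj, hc, hcw⟩ := hG.exists_adj_mem_geodesicInterval hvw hw
    exact Or.inr (Set.mem_biUnion ⟨hadj, hc⟩ ⟨hwR, hcw⟩)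
  obtain ⟨r, hr0, hr⟩ :=
    exists_seq_of_forall_exists hstep (hR.mono fun w hw => ⟨hw, left_mem_geodesicInterval⟩)
  exact ⟨r, hr0, fun i => ⟨(hr i).1.1, (hr i).1.2, (hr i).2⟩⟩

lemma hasInfiniteIndependentPath_of_finite_branching (hdeg : ∀ v, 2 ≤ (G.neighborSet v).ncard)
    {r : ℕ → V} (hinj : Function.Injective r) (hadj : ∀ i, G.Adj (r i) (r (i + 1)))
    (hfin : {i | 3 ≤ (G.neighborSet (r i)).ncard}.Finite) : HasInfiniteIndependentPath G := by
  obtain ⟨N, hN⟩ := hfin.bddAbove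
  refine ⟨fun i => r (i + (N + 1)), hinj.comp (add_left_injective _), fun i => ?_, fun i _ => ?_⟩
  · simpa only [Nat.add_right_comm] using hadj (i + (N + 1))
  · dsimp only
    have h3 : ¬ 3 ≤ (G.neighborSet (r (i + (N + 1)))).ncard := fun h3 => by
      have := hN h3
      omega
    have := hdeg (r (i + (N + 1)))
    omega

lemma IsTree.contours_finite_of_not_hasInfiniteIndependentPath (hG : G.IsTree)
    (hlf : ∀ v, (G.neighborSet v).Finite) (hdeg : ∀ v, 2 ≤ (G.neighborSet v).ncard) (x : V)
    (h : ¬ HasInfiniteIndependentPath G) (n : ℕ) : (contours G x n).Finite := by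
  set R := ⋃₀ {S | S.Finite ∧ G.IsStarShaped x S ∧ (G.edgeBoundary S).ncard = n}
  have hR : R.Finite := by
    by_contra hR
    obtain ⟨r, hr0, hr⟩ := hG.connected.exists_ray_of_infinite hlf x hR
    have hrd : ∀ i, G.dist x (r i) = i := fun i => by
      induction i with
      | zero => rw [hr0, dist_self]
      | succ i ih => rw [(hr i).2.1, ih]
    have hinj : Function.Injective r := fun i j hij => by rw [← hrd i, ← hrd j, hij]
    refine h (hasInfiniteIndependentPath_of_finite_branching hdeg hinj (fun i => (hr i).1)
      (Nat.finite_of_forall_ncard_inter_Iic_le (k := n) fun i => ?_))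
    obtain ⟨w, ⟨S, ⟨hSfin, hS, hSn⟩, hwS⟩, hiw⟩ := (hr i).2.2.nonempty
    have hrS : ∀ j ≤ i, r j ∈ S := fun j hj => hS w hwS (hG.connected.geodesicInterval_subset hiw
      (hG.connected.mem_geodesicInterval_of_le (fun i => (hr i).1) (fun i => (hr i).2.1) hj))
    have hbranch := hS.ncard_branch_add_two_le hG hlf hdeg hSfin ⟨w, hwS⟩
    have := Set.ncard_le_ncard_of_injOn (s := {j | 3 ≤ (G.neighborSet (r j)).ncard} ∩ Set.Iic i)
      (t := {v ∈ S | 3 ≤ (G.neighborSet v).ncard}) r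
      (fun j hj => ⟨hrS j hj.2, hj.1⟩) hinj.injOn (hSfin.subset fun _ hv => hv.1)
    omega
  refine (hR.finite_subsets.image G.edgeBoundary).subset fun C hC => ?_
  obtain ⟨S, hSfin, hS, -, hSn, rfl⟩ := hG.exists_isStarShaped_of_mem_contours hC
  exact ⟨S, Set.subset_sUnion_of_mem ⟨hSfin, hS, hSn⟩, rfl⟩

end SimpleGraph

/-- For a locally finite rooted tree `T` with root `x` and without leaves,
there exists `n ≥ 1` with `F^n_T(x)` infinite if and only if `T` has an infinite
independent path. -/
theorem infinite_contours_iff_infiniteIndependentPath {V : Type*} (G : SimpleGraph V) (x : V)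
    (htree : G.IsTree) (hlocfin : ∀ v : V, (G.neighborSet v).Finite) (hinf : Infinite V)
    (hnoleaf : ∀ v : V, (G.neighborSet v).ncard ≠ 1) :
    (∃ n : ℕ, 1 ≤ n ∧ (contours G x n).Infinite) ↔ HasInfiniteIndependentPath G := by
  have hdeg : ∀ v, 2 ≤ (G.neighborSet v).ncard := fun v => by
    obtain ⟨w, hw⟩ := htree.connected.preconnected.exists_adj_of_nontrivial v
    have := (Set.ncard_pos (hlocfin v)).2 ⟨w, hw⟩
    have := hnoleaf v
    omega
  exact ⟨fun ⟨n, _, hn⟩ => by_contra fun h =>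
      hn (htree.contours_finite_of_not_hasInfiniteIndependentPath hlocfin hdeg x h n),
    htree.contours_infinite_of_hasInfiniteIndependentPath hlocfin hdeg x⟩
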